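/- arXiv:2007.09716 — 6 statements merged into one kernel-verified Lean document; each statement's English description precedes it below -/
import Mathlib

section
/- If f is analytic on the unit disk with f(z) = z + a₂z² + ... and |(z/f(z))²·f'(z) − 1| < λ for all z in the unit disk (where 0 < λ ≤ 1), then f is univalent (injective) on the unit disk. -/
/-!
Let `G` be the analytic extension of `1 / f z - 1 / z` across `0`. Then
`z ^ 2 * G' z = 1 - (z / f z) ^ 2 * f' z`, a function of norm at most `λ` with a double zero
at the origin, so the Schwarz lemma bounds it by `λ * ‖z‖ ^ 2`, i.e. `‖G'‖ ≤ λ ≤ 1` on the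
disc. Thus `G` is `1`-Lipschitz, whereas `f z₁ = f z₂` with `z₁ ≠ z₂` would give
`‖G z₁ - G z₂‖ = ‖z₁ - z₂‖ / ‖z₁ * z₂‖ > ‖z₁ - z₂‖`.
-/

open Complex Metric Set Filter Topology

namespace Complex

variable {E : Type*} [NormedAddCommGroup E] [NormedSpace ℂ E]

theorem dist_le_mul_div_sq_of_mapsTo_ball_of_hasDerivAt_zero {k : ℂ → E} {c z : ℂ}
    {R₁ R₂ : ℝ} (hd : DifferentiableOn ℂ k (ball c R₁))
    (h_maps : MapsTo k (ball c R₁) (closedBall (k c) R₂)) (hk' : HasDerivAt k 0 c)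
    (hz : z ∈ ball c R₁) :
    dist (k z) (k c) ≤ R₂ * (dist z c / R₁) ^ 2 := by
  refine dist_le_mul_div_pow_of_mapsTo_ball_of_isLittleO (n := 1) hd h_maps ?_ hz
  simpa using (hasDerivAt_iff_isLittleO.1 hk').norm_right

theorem norm_deriv_le_of_norm_sq_smul_deriv_le [CompleteSpace E] {g : ℂ → E} {R : ℝ}
    (hg : DifferentiableOn ℂ g (ball 0 1))
    (hR : ∀ z ∈ ball (0 : ℂ) 1, z ≠ 0 → ‖z ^ 2 • deriv g z‖ ≤ R) {z : ℂ}
    (hz : z ∈ ball (0 : ℂ) 1) :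
    ‖deriv g z‖ ≤ R := by
  have hg' : DifferentiableOn ℂ (deriv g) (ball 0 1) :=
    (hg.analyticOnNhd isOpen_ball).deriv.differentiableOn
  set k : ℂ → E := fun w => w ^ 2 • deriv g w
  have hR0 : 0 ≤ R := (norm_nonneg _).trans (hR (1 / 2) (by norm_num) (by norm_num))
  have hk_maps : MapsTo k (ball 0 1) (closedBall (k 0) R) := by
    intro w hw
    rcases eq_or_ne w 0 with rfl | hw0
    · simpa [k] using hR0
    · simpa [k] using hR w hw hw0
  have hk_diff : DifferentiableOn ℂ k (ball 0 1) := fun x hx =>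
    ((differentiableAt_pow 2).fun_smul
      ((hg' x hx).differentiableAt (isOpen_ball.mem_nhds hx))).differentiableWithinAt
  have hk_deriv : HasDerivAt k 0 0 := by
    simpa using (hasDerivAt_pow 2 (0 : ℂ)).fun_smul
      ((hg' 0 (mem_ball_self one_pos)).differentiableAt (ball_mem_nhds _ one_pos)).hasDerivAt
  have hbound_of_ne : ∀ w ∈ ball (0 : ℂ) 1, w ≠ 0 → ‖deriv g w‖ ≤ R := by
    intro w hw hw0
    have hschwarz :=
      dist_le_mul_div_sq_of_mapsTo_ball_of_hasDerivAt_zero hk_diff hk_maps hk_deriv hw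
    simp only [k, ne_eq, OfNat.ofNat_ne_zero, not_false_eq_true, zero_pow, zero_smul,
      dist_zero_right, norm_smul, norm_pow, div_one] at hschwarz
    exact le_of_mul_le_mul_left (hschwarz.trans_eq (mul_comm _ _)) (pow_pos (norm_pos_iff.2 hw0) 2)
  rcases eq_or_ne z 0 with rfl | hz0
  · have hcont : ContinuousAt (deriv g) 0 :=
      hg'.continuousOn.continuousAt (ball_mem_nhds _ one_pos)
    refine le_of_tendsto (hcont.norm.tendsto.mono_left (nhdsWithin_le_nhds (s := {0}ᶜ))) ?_
    filter_upwards [self_mem_nhdsWithin, nhdsWithin_le_nhds (ball_mem_nhds 0 one_pos)]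
      with w hw0 hw using hbound_of_ne w hw hw0
  · exact hbound_of_ne z hz hz0

end Complex

theorem norm_sub_lt_norm_inv_sub_inv {𝕜 : Type*} [NormedField 𝕜] {z w : 𝕜} (hz : ‖z‖ < 1)
    (hw : ‖w‖ < 1) (hz0 : z ≠ 0) (hw0 : w ≠ 0) (hzw : z ≠ w) :
    ‖z - w‖ < ‖z⁻¹ - w⁻¹‖ := by
  have hzw_pos : 0 < ‖z - w‖ := norm_pos_iff.2 (sub_ne_zero.2 hzw)
  have hprod : ‖z‖ * ‖w‖ < 1 := by nlinarith [norm_nonneg z, norm_nonneg w]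
  rw [inv_sub_inv hz0 hw0, norm_div, norm_mul, norm_sub_rev w z,
    lt_div_iff₀ (mul_pos (norm_pos_iff.2 hz0) (norm_pos_iff.2 hw0))]
  nlinarith

/-- When `f 0 = 0` and `f' 0 = 1`, the extension across `0` of `z ↦ 1 / f z - 1 / z`: away
from `0`, `(dslope f 0)⁻¹` is `z ↦ z / f z`, with value `1` at `0`. -/
noncomputable def invSubInv (f : ℂ → ℂ) : ℂ → ℂ := dslope (dslope f 0)⁻¹ 0

section invSubInv

variable {f : ℂ → ℂ}

theorem invSubInv_apply (hf0 : f 0 = 0) (hf1 : deriv f 0 = 1) {z : ℂ} (hz : z ≠ 0) :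
    invSubInv f z = (f z)⁻¹ - z⁻¹ := by
  simp only [invSubInv, dslope_of_ne _ hz, slope_def_field, Pi.inv_apply, dslope_same, hf0, hf1,
    sub_zero, inv_one]
  rcases eq_or_ne (f z) 0 with hfz | hfz
  · simp [hfz, neg_div]
  · field_simp

theorem differentiableOn_invSubInv (hf : DifferentiableOn ℂ f (ball 0 1)) (hf0 : f 0 = 0)
    (hf1 : deriv f 0 ≠ 0) (hne : ∀ z ∈ ball (0 : ℂ) 1, z ≠ 0 → f z ≠ 0) :
    DifferentiableOn ℂ (invSubInv f) (ball 0 1) := by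
  have hball : ball (0 : ℂ) 1 ∈ 𝓝 0 := ball_mem_nhds _ one_pos
  refine (differentiableOn_dslope hball).2 (((differentiableOn_dslope hball).2 hf).inv ?_)
  intro z hz
  rcases eq_or_ne z 0 with rfl | hz0
  · simpa [dslope_same] using hf1
  · rw [dslope_of_ne _ hz0, slope_def_field, hf0, sub_zero, sub_zero]
    exact div_ne_zero (hne z hz hz0) hz0

theorem sq_mul_deriv_invSubInv (hf0 : f 0 = 0) (hf1 : deriv f 0 = 1) {z : ℂ} (hz : z ≠ 0)
    (hfz : f z ≠ 0) (hdf : DifferentiableAt ℂ f z) :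
    z ^ 2 * deriv (invSubInv f) z = 1 - (z / f z) ^ 2 * deriv f z := by
  have hev : invSubInv f =ᶠ[𝓝 z] fun w => (f w)⁻¹ - w⁻¹ :=
    (eventually_ne_nhds hz).mono fun w hw => invSubInv_apply hf0 hf1 hw
  rw [hev.deriv_eq, deriv_fun_sub (hdf.fun_inv hfz) (differentiableAt_inv hz),
    deriv_fun_inv'' hdf hfz, deriv_inv]
  field_simp
  ring

end invSubInv

theorem univalence_of_U_lambda_general (f : ℂ → ℂ) (lam : ℝ) (hlam1 : lam ≤ 1)
    (hf : AnalyticOnNhd ℂ f (ball 0 1)) (hf0 : f 0 = 0) (hf1 : deriv f 0 = 1)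
    (hU : ∀ z ∈ ball (0:ℂ) 1, z ≠ 0 → ‖(z / f z) ^ 2 * deriv f z - 1‖ < lam) :
    Set.InjOn f (ball 0 1) := by
  have hne : ∀ z ∈ ball (0 : ℂ) 1, z ≠ 0 → f z ≠ 0 := fun z hz hz0 hfz => by
    simpa [hfz] using (hU z hz hz0).trans_le hlam1
  have hG := differentiableOn_invSubInv hf.differentiableOn hf0 (hf1 ▸ one_ne_zero) hne
  have hG' : ∀ z ∈ ball (0 : ℂ) 1, ‖deriv (invSubInv f) z‖ ≤ lam := by
    refine fun z => Complex.norm_deriv_le_of_norm_sq_smul_deriv_le hG fun w hw hw0 => ?_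
    rw [smul_eq_mul, sq_mul_deriv_invSubInv hf0 hf1 hw0 (hne w hw hw0)
      (hf w hw).differentiableAt, norm_sub_rev]
    exact (hU w hw hw0).le
  intro z hz w hw hfzw
  by_contra hzw
  have hz0 : z ≠ 0 := by rintro rfl; exact hne w hw (Ne.symm hzw) (hfzw ▸ hf0)
  have hw0 : w ≠ 0 := by rintro rfl; exact hne z hz hzw (hfzw.symm ▸ hf0)
  have hlip := Convex.norm_image_sub_le_of_norm_deriv_le
    (fun x hx => hG.differentiableAt (isOpen_ball.mem_nhds hx)) hG' (convex_ball 0 1) hw hz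
  rw [invSubInv_apply hf0 hf1 hz0, invSubInv_apply hf0 hf1 hw0, hfzw, sub_sub_sub_cancel_left]
    at hlip
  have hgap := norm_sub_lt_norm_inv_sub_inv (mem_ball_zero_iff.1 hw) (mem_ball_zero_iff.1 hz)
    hw0 hz0 (Ne.symm hzw)
  rw [norm_sub_rev w z] at hgap
  linarith [mul_le_of_le_one_left (norm_nonneg (z - w)) hlam1]

theorem univalence_of_U_lambda (f : ℂ → ℂ) (lam : ℝ) (hlam0 : 0 < lam) (hlam1 : lam ≤ 1)
    (hf : AnalyticOnNhd ℂ f (ball 0 1)) (hf0 : f 0 = 0) (hf1 : deriv f 0 = 1)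
    (hU : ∀ z ∈ ball (0:ℂ) 1, z ≠ 0 → ‖(z / f z) ^ 2 * deriv f z - 1‖ < lam) :
    Set.InjOn f (ball 0 1) :=
  univalence_of_U_lambda_general f lam hlam1 hf hf0 hf1 hU
end

section
/- The function f defined by z/f(z) = (1−z)²(1+z/2), i.e. f(z) = z/((1−z)²(1+z/2)), belongs to the class 𝒰 = 𝒰(1) but is not starlike: at z = i, z·f'(z)/f(z) = −1/5 + 3i/5, which has negative real part. -/
open Complex Metric

/-!
With `g z = (1 - z)² (1 + z/2) = 1 - 3z/2 + z³/2` and `f = z / g`, one has `g - z g' = 1 - z³`,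
hence `f' = (1 - z³) / g²`. Consequently `(z/f)² f' - 1 = -z³` has modulus `< 1` on the disk, while
`z f'/f = (1 - z³) / g`, which equals `(-1 + 3i)/5` at `z = i` and still has negative real part at
the interior point `z = 9i/10`.
-/

namespace UNotStarlike

noncomputable def denom (z : ℂ) : ℂ := (1 - z) ^ 2 * (1 + z / 2)

lemma denom_ne_zero {z : ℂ} (hz : ‖z‖ < 1) : denom z ≠ 0 := by
  have h1 : 1 - z ≠ 0 := fun h => by
    rw [← sub_eq_zero.mp h] at hz; norm_num at hz
  have h2 : 1 + z / 2 ≠ 0 := fun h => by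
    rw [show z = -2 by linear_combination 2 * h] at hz; norm_num at hz
  exact mul_ne_zero (pow_ne_zero _ h1) h2

lemma hasDerivAt_denom (z : ℂ) : HasDerivAt denom (-3 / 2 + 3 / 2 * z ^ 2) z := by
  have h : HasDerivAt denom _ z := (((hasDerivAt_id' z).const_sub 1).fun_pow 2).fun_mul
    (((hasDerivAt_id' z).div_const 2).const_add 1)
  exact h.congr_deriv (by norm_num; ring)

lemma hasDerivAt_id_div_denom {z : ℂ} (hz : denom z ≠ 0) :
    HasDerivAt (fun w => w / denom w) ((1 - z ^ 3) / denom z ^ 2) z :=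
  ((hasDerivAt_id' z).fun_div (hasDerivAt_denom z) hz).congr_deriv
    (congrArg (· / denom z ^ 2) (by simp only [denom]; ring))

lemma deriv_id_div_denom {z : ℂ} (hz : denom z ≠ 0) :
    deriv (fun w => w / denom w) z = (1 - z ^ 3) / denom z ^ 2 :=
  (hasDerivAt_id_div_denom hz).deriv

lemma analyticOnNhd_id_div_denom : AnalyticOnNhd ℂ (fun w => w / denom w) (ball 0 1) := by
  refine analyticOnNhd_id.div ?_ fun z hz => denom_ne_zero (by simpa using hz)
  exact ((analyticOnNhd_const.sub analyticOnNhd_id).pow 2).mul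
    (analyticOnNhd_const.add (analyticOnNhd_id.div_const))

lemma sq_div_mul_deriv_sub_one {z : ℂ} (hz0 : z ≠ 0) (hz : denom z ≠ 0) :
    (z / (z / denom z)) ^ 2 * deriv (fun w => w / denom w) z - 1 = -z ^ 3 := by
  rw [deriv_id_div_denom hz]
  field_simp
  ring

lemma mul_deriv_div_eq {z : ℂ} (hz0 : z ≠ 0) (hz : denom z ≠ 0) :
    z * deriv (fun w => w / denom w) z / (z / denom z) = (1 - z ^ 3) / denom z := by
  rw [deriv_id_div_denom hz]
  field_simp

lemma denom_I : denom I = 1 - 2 * I := by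
  simp only [denom]
  linear_combination (I / 2) * I_sq

lemma one_sub_I_pow_three_div_denom_I : (1 - I ^ 3) / denom I = -1 / 5 + 3 / 5 * I := by
  have h : (1 - 2 * I : ℂ) ≠ 0 := fun h => by simpa using congrArg im h
  rw [denom_I, div_eq_iff h]
  linear_combination (6 / 5 - I) * I_sq

lemma re_one_sub_pow_three_div_denom_lt_zero :
    ((1 - (9 / 10 * I) ^ 3) / denom (9 / 10 * I)).re < 0 := by
  have hnum : 1 - (9 / 10 * I) ^ 3 = 1 + 729 / 1000 * I := by
    linear_combination (-(729 / 1000) * I) * I_sq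
  have hden : denom (9 / 10 * I) = 1 - 3429 / 2000 * I := by
    simp only [denom]
    linear_combination (729 / 2000 * I) * I_sq
  rw [hnum, hden, div_re]
  simp [normSq_apply]
  norm_num

end UNotStarlike

open UNotStarlike in
theorem U_not_starlike_example (f : ℂ → ℂ)
    (hf : ∀ z, f z = z / ((1 - z) ^ 2 * (1 + z / 2))) :
    (AnalyticOnNhd ℂ f (ball 0 1) ∧ f 0 = 0 ∧ deriv f 0 = 1 ∧
      ∀ z ∈ ball (0:ℂ) 1, z ≠ 0 → ‖(z / f z) ^ 2 * deriv f z - 1‖ < 1) ∧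
    Complex.I * deriv f Complex.I / f Complex.I = -1/5 + (3/5) * Complex.I ∧
    (Complex.I * deriv f Complex.I / f Complex.I).re < 0 ∧
    ¬ (∀ z ∈ ball (0:ℂ) 1, z ≠ 0 → 0 < (z * deriv f z / f z).re) := by
  obtain rfl : f = fun w => w / denom w := funext hf
  have hdenom {z : ℂ} (hz : z ∈ ball (0 : ℂ) 1) : denom z ≠ 0 := denom_ne_zero (by simpa using hz)
  have hI : I * deriv (fun w => w / denom w) I / (I / denom I) = -1 / 5 + 3 / 5 * I := by
    rw [mul_deriv_div_eq I_ne_zero (by simp [denom_I, Complex.ext_iff]),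
      one_sub_I_pow_three_div_denom_I]
  refine ⟨⟨analyticOnNhd_id_div_denom, by simp, ?_, fun z hz hz0 => ?_⟩, hI, ?_, fun h => ?_⟩
  · rw [deriv_id_div_denom (hdenom (mem_ball_self one_pos))]
    simp [denom]
  · rw [sq_div_mul_deriv_sub_one hz0 (hdenom hz), norm_neg, norm_pow]
    exact pow_lt_one₀ (norm_nonneg z) (by simpa using hz) (by norm_num)
  · rw [hI]
    norm_num
  · have hz : (9 / 10 * I : ℂ) ∈ ball (0 : ℂ) 1 := by simp; norm_num
    have hpos := h _ hz (by simp)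
    rw [mul_deriv_div_eq (by simp) (hdenom hz)] at hpos
    exact re_one_sub_pow_three_div_denom_lt_zero.not_gt hpos
end

section
/- The function f(z) = −log(1−z) is convex (hence starlike) on the unit disk but does not belong to the class 𝒰(1); in particular (z/f(z))²f'(z) evaluated at z = 0.99 exceeds 1. -/
/-!
On the half-plane `Re z < 1` we have `f' = 1/(1-z)` and `f'' = 1/(1-z)²`, so
`1 + z f''/f' = 1/(1-z)` has positive real part. For starlikeness, the inverse of `z f'/f` is
`(1-z) f(z)/z = ∫₀¹ (1-z)/(1-tz) dt`, and every integrand has positive real part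
`((1 - Re z)(1 - t Re z) + t (Im z)²)/|1-tz|²`. Finally `f(0.99) = log 100 < 5`, so
`(z/f)² f'` at `0.99` is the real number `0.99² · 100 / (log 100)² > 2`, at distance more than `1`
from `1`.
-/

open Complex Metric Set

lemma inv_re_pos_of_re_pos {z : ℂ} (hz : 0 < z.re) : 0 < z⁻¹.re := by
  rw [inv_re]
  exact div_pos hz (normSq_pos.mpr fun h => by simp [h] at hz)

lemma one_lt_norm_sub_one_of_two_lt_re {w : ℂ} (hw : 2 < w.re) : 1 < ‖w - 1‖ :=
  calc (1 : ℝ) < (w - 1).re := by simp only [sub_re, one_re]; linarith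
    _ ≤ ‖w - 1‖ := re_le_norm _

section HalfPlane

variable {z : ℂ}

lemma re_one_sub_ofReal_mul_pos (hz : z.re < 1) {t : ℝ} (ht : t ∈ Icc (0 : ℝ) 1) :
    0 < (1 - (t : ℂ) * z).re := by
  simp only [sub_re, one_re, re_ofReal_mul]
  rcases le_or_gt z.re 0 with hz0 | hz0
  · nlinarith [ht.1]
  · nlinarith [ht.2]

lemma one_sub_ofReal_mul_ne_zero (hz : z.re < 1) {t : ℝ} (ht : t ∈ Icc (0 : ℝ) 1) :
    1 - (t : ℂ) * z ≠ 0 := fun h => by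
  simpa [h] using re_one_sub_ofReal_mul_pos hz ht

lemma one_sub_ne_zero_of_re_lt_one (hz : z.re < 1) : 1 - z ≠ 0 :=
  sub_ne_zero.mpr fun h => by simp [← h] at hz

lemma hasDerivAt_neg_log_one_sub (hz : z.re < 1) :
    HasDerivAt (fun w => -log (1 - w)) (1 - z)⁻¹ z := by
  have hslit : 1 - z ∈ slitPlane := Or.inl (by simp only [sub_re, one_re]; linarith)
  have h := (((hasDerivAt_id' z).const_sub 1).clog hslit).neg
  rwa [neg_div, neg_neg, one_div] at h

lemma deriv_neg_log_one_sub_eventuallyEq (hz : z.re < 1) :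
    deriv (fun w => -log (1 - w)) =ᶠ[nhds z] fun w => (1 - w)⁻¹ := by
  filter_upwards [(isOpen_lt continuous_re continuous_const).mem_nhds hz] with w hw
  exact (hasDerivAt_neg_log_one_sub hw).deriv

lemma deriv_deriv_neg_log_one_sub (hz : z.re < 1) :
    deriv (deriv fun w => -log (1 - w)) z = ((1 - z) ^ 2)⁻¹ := by
  rw [(deriv_neg_log_one_sub_eventuallyEq hz).deriv_eq]
  have h : HasDerivAt (fun w : ℂ => 1 - w) (-1) z := by
    simpa using (hasDerivAt_id z).const_sub 1
  exact (h.inv (one_sub_ne_zero_of_re_lt_one hz)).deriv.trans (by simp)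

lemma neg_log_one_sub_eq_integral (hz : z.re < 1) :
    -log (1 - z) = ∫ t in (0 : ℝ)..1, z * (1 - (t : ℂ) * z)⁻¹ := by
  have hI : uIcc (0 : ℝ) 1 = Icc 0 1 := uIcc_of_le zero_le_one
  have hderiv : ∀ t ∈ uIcc (0 : ℝ) 1,
      HasDerivAt (fun t : ℝ => -log (1 - (t : ℂ) * z)) (z * (1 - (t : ℂ) * z)⁻¹) t := by
    intro t ht
    rw [hI] at ht
    have hslit : 1 - (t : ℂ) * z ∈ slitPlane := Or.inl (re_one_sub_ofReal_mul_pos hz ht)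
    have h := ((((hasDerivAt_id' (t : ℂ)).mul_const z).const_sub 1).clog hslit).neg.comp_ofReal
    rwa [one_mul, neg_div, neg_neg, div_eq_mul_inv] at h
  have hcont : ContinuousOn (fun t : ℝ => z * (1 - (t : ℂ) * z)⁻¹) (uIcc 0 1) := by
    refine continuousOn_const.mul (ContinuousOn.inv₀ (by fun_prop) fun t ht => ?_)
    exact one_sub_ofReal_mul_ne_zero hz (hI ▸ ht)
  rw [intervalIntegral.integral_eq_sub_of_hasDerivAt hderiv hcont.intervalIntegrable]
  simp

lemma re_one_sub_div_one_sub_ofReal_mul_pos (hz : z.re < 1) {t : ℝ} (ht : t ∈ Icc (0 : ℝ) 1) :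
    0 < ((1 - z) / (1 - (t : ℂ) * z)).re := by
  have hpos := re_one_sub_ofReal_mul_pos hz ht
  have hN := normSq_pos.mpr (one_sub_ofReal_mul_ne_zero hz ht)
  rw [div_re, ← add_div]
  refine div_pos ?_ hN
  simp only [sub_re, sub_im, one_re, one_im, re_ofReal_mul, im_ofReal_mul] at hpos ⊢
  nlinarith [mul_pos (sub_pos.mpr hz) hpos, mul_nonneg ht.1 (sq_nonneg z.im)]

lemma re_one_sub_mul_neg_log_one_sub_div_pos (hz : z.re < 1) (hz0 : z ≠ 0) :
    0 < ((1 - z) * -log (1 - z) / z).re := by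
  have hI : uIcc (0 : ℝ) 1 = Icc 0 1 := uIcc_of_le zero_le_one
  have hcont : ContinuousOn (fun t : ℝ => (1 - z) / (1 - (t : ℂ) * z)) (uIcc 0 1) := by
    refine continuousOn_const.div (by fun_prop) fun t ht => ?_
    exact one_sub_ofReal_mul_ne_zero hz (hI ▸ ht)
  have hint : (1 - z) * -log (1 - z) / z = ∫ t in (0 : ℝ)..1, (1 - z) / (1 - (t : ℂ) * z) := by
    rw [neg_log_one_sub_eq_integral hz, ← intervalIntegral.integral_const_mul,
      ← intervalIntegral.integral_div]
    refine intervalIntegral.integral_congr fun t _ => ?_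
    field_simp
  rw [hint, ← reCLM_apply, ← reCLM.intervalIntegral_comp_comm hcont.intervalIntegrable]
  refine intervalIntegral.intervalIntegral_pos_of_pos_on ?_ (fun t ht => ?_) zero_lt_one
  · exact (continuous_re.comp_continuousOn hcont).intervalIntegrable
  · exact re_one_sub_div_one_sub_ofReal_mul_pos hz (Ioo_subset_Icc_self ht)

end HalfPlane

lemma neg_log_one_sub_ninety_nine_hundredths : -log (1 - 0.99) = Real.log 100 := by
  rw [show (1 : ℂ) - 0.99 = ((100 : ℝ)⁻¹ : ℝ) by norm_num, ← ofReal_log (by norm_num),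
    Real.log_inv, ofReal_neg, neg_neg]

lemma Real.log_hundred_lt_five : Real.log 100 < 5 :=
  calc Real.log 100 < Real.log (2 ^ 7) := Real.log_lt_log (by norm_num) (by norm_num)
    _ = 7 * Real.log 2 := by rw [Real.log_pow]; norm_num
    _ < 5 := by linarith [Real.log_two_lt_d9]

lemma two_lt_re_sq_div_neg_log_mul_inv_at_ninety_nine_hundredths :
    2 < (((0.99 : ℂ) / -log (1 - 0.99)) ^ 2 * (1 - 0.99)⁻¹).re := by
  have hL := Real.log_pos (by norm_num : (1 : ℝ) < 100)
  rw [neg_log_one_sub_ninety_nine_hundredths,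
    show ((0.99 : ℂ) / Real.log 100) ^ 2 * (1 - 0.99)⁻¹ = ((0.99 / Real.log 100) ^ 2 * 100 : ℝ) by
      push_cast; norm_num,
    ofReal_re, div_pow, div_mul_eq_mul_div, lt_div_iff₀ (by positivity)]
  nlinarith [Real.log_hundred_lt_five]

theorem log_convex_not_in_U (f : ℂ → ℂ)
    (hf : ∀ z, f z = -Complex.log (1 - z)) :
    (∀ z ∈ ball (0:ℂ) 1, 0 < (1 + z * deriv (deriv f) z / deriv f z).re) ∧
    (∀ z ∈ ball (0:ℂ) 1, z ≠ 0 → 0 < (z * deriv f z / f z).re) ∧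
    1 < (((0.99 : ℂ) / f 0.99) ^ 2 * deriv f 0.99).re ∧
    ¬ (∀ z ∈ ball (0:ℂ) 1, z ≠ 0 → ‖(z / f z) ^ 2 * deriv f z - 1‖ < 1) := by
  obtain rfl : f = fun w => -log (1 - w) := funext hf
  have hre : ∀ z ∈ ball (0 : ℂ) 1, z.re < 1 := fun z hz =>
    (re_le_norm z).trans_lt (mem_ball_zero_iff.mp hz)
  have hderiv : ∀ z ∈ ball (0 : ℂ) 1, deriv (fun w => -log (1 - w)) z = (1 - z)⁻¹ :=
    fun z hz => (hasDerivAt_neg_log_one_sub (hre z hz)).deriv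
  have h99 : (0.99 : ℂ) ∈ ball 0 1 := mem_ball_zero_iff.mpr (by norm_num)
  have hvalue := two_lt_re_sq_div_neg_log_mul_inv_at_ninety_nine_hundredths
  rw [← hderiv _ h99] at hvalue
  refine ⟨fun z hz => ?_, fun z hz hz0 => ?_, one_lt_two.trans hvalue, fun hU => ?_⟩
  · have hz1 := one_sub_ne_zero_of_re_lt_one (hre z hz)
    rw [deriv_deriv_neg_log_one_sub (hre z hz), hderiv z hz,
      show 1 + z * ((1 - z) ^ 2)⁻¹ / (1 - z)⁻¹ = (1 - z)⁻¹ by field_simp; ring]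
    exact inv_re_pos_of_re_pos (by simpa using hre z hz)
  · rw [hderiv z hz, show z * (1 - z)⁻¹ / -log (1 - z) = ((1 - z) * -log (1 - z) / z)⁻¹ by
      simp only [div_eq_mul_inv, mul_inv, inv_inv]; ring]
    exact inv_re_pos_of_re_pos (re_one_sub_mul_neg_log_one_sub_div_pos (hre z hz) hz0)
  · exact (one_lt_norm_sub_one_of_two_lt_re hvalue).not_gt (hU 0.99 h99 (by norm_num))
end

section
/- For each f ∈ 𝒰(λ) with 0 < λ ≤ 1 and expansion f(z) = z + a₂z² + ..., there exists an analytic function ω₁ on 𝔻 with |ω₁(z)| ≤ |z| and |ω₁'(z)| ≤ 1 for all z ∈ 𝔻, such that z/f(z) = 1 − a₂z − λ z ω₁(z). -/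
/-! Put `g = (dslope f 0)⁻¹`, the analytic extension of `z / f z` with `g 0 = 1` and
`g' 0 = -a₂`. Taylor's formula `g z = 1 - a₂ z + z² k z` with `k = dslope (dslope g 0) 0` gives the
representation with `ω z = -z k z / λ`, so `ω 0 = 0`. Differentiating `z / f z = 1 - a₂ z - λ z ω z`
yields `λ z² ω' z = (z / f z)² f' z - 1`, of norm `< λ`; the Schwarz lemma for functions vanishing
to second order at `0` then bounds `‖ω'‖` by `1`, and `‖ω z‖ ≤ ‖z‖` follows by integrating from `0`. -/

open Complex Metric Filter Topology

theorem AnalyticAt.deriv_dslope_self {𝕜 : Type*} [NontriviallyNormedField 𝕜] [CompleteSpace 𝕜]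
    [CharZero 𝕜] {f : 𝕜 → 𝕜} {c : 𝕜} (hf : AnalyticAt 𝕜 f c) :
    deriv (dslope f c) c = iteratedDeriv 2 f c / 2 := by
  rw [hf.hasFPowerSeriesAt.has_fpower_series_dslope_fslope.deriv]
  change (FormalMultilinearSeries.fslope _).coeff 1 = _
  rw [FormalMultilinearSeries.coeff_fslope, FormalMultilinearSeries.coeff_ofScalars]
  norm_num [Nat.factorial]

theorem eq_add_sub_smul_deriv_add_sq_smul_dslope_dslope {𝕜 E : Type*} [NontriviallyNormedField 𝕜]
    [NormedAddCommGroup E] [NormedSpace 𝕜 E] (g : 𝕜 → E) (c z : 𝕜) :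
    g z = g c + (z - c) • deriv g c + (z - c) ^ 2 • dslope (dslope g c) c z := by
  have h := sub_smul_dslope (dslope g c) c z
  rw [dslope_same] at h
  rw [pow_two, mul_smul, h, smul_sub, sub_smul_dslope]
  abel

theorem norm_le_div_sq_of_norm_sq_smul_le {E : Type*} [NormedAddCommGroup E] [NormedSpace ℂ E]
    {G : ℂ → E} {R M : ℝ} (hG : DifferentiableOn ℂ G (ball 0 R))
    (hM : ∀ z ∈ ball (0 : ℂ) R, ‖z ^ 2 • G z‖ ≤ M) {z : ℂ} (hz : z ∈ ball 0 R) :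
    ‖G z‖ ≤ M / R ^ 2 := by
  have hR : 0 < R := nonempty_ball.mp ⟨z, hz⟩
  set F : ℂ → E := fun w => w ^ 2 • G w
  have hG0 : DifferentiableAt ℂ G 0 := hG.differentiableAt (ball_mem_nhds 0 hR)
  have hF : DifferentiableOn ℂ F (ball 0 R) := (differentiableOn_pow 2).smul hG
  have hF0 : HasDerivAt F 0 0 := ((hasDerivAt_pow 2 0).smul hG0.hasDerivAt).congr_deriv (by simp)
  have hFo : (F · - F 0) =o[𝓝 0] (fun w => ‖w - 0‖ ^ 1) := by
    simpa using hF0.isLittleO.norm_right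
  have hpunct : ∀ w ∈ ball (0 : ℂ) R, w ≠ 0 → ‖G w‖ ≤ M / R ^ 2 := by
    intro w hw hw0
    have hSchwarz := dist_le_mul_div_pow_of_mapsTo_ball_of_isLittleO hF
      (fun v hv => by simpa [F] using hM v hv) hFo hw
    simp only [F, dist_zero_right, zero_pow two_ne_zero, zero_smul, norm_smul, norm_pow,
      div_pow, Nat.reduceAdd] at hSchwarz
    have hw2 : 0 < ‖w‖ ^ 2 := by positivity
    rw [← mul_div_assoc, le_div_iff₀ (by positivity)] at hSchwarz
    rw [le_div_iff₀ (by positivity)]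
    refine le_of_mul_le_mul_left ?_ hw2
    linarith
  rcases eq_or_ne z 0 with rfl | hz0
  · refine le_of_tendsto (hG0.continuousAt.continuousWithinAt (s := {0}ᶜ)).tendsto.norm ?_
    filter_upwards [nhdsWithin_le_nhds (ball_mem_nhds 0 hR), self_mem_nhdsWithin] with w hw hw0
    exact hpunct w hw hw0
  · exact hpunct z hz hz0

theorem mul_sq_deriv_eq_of_div_eq {𝕜 : Type*} [NontriviallyNormedField 𝕜] {f ω : 𝕜 → 𝕜}
    {a c z : 𝕜} (hf : DifferentiableAt 𝕜 f z) (hfz : f z ≠ 0) (hω : DifferentiableAt 𝕜 ω z)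
    (heq : ∀ᶠ w in 𝓝 z, w / f w = 1 - a * w - c * w * ω w) :
    c * z ^ 2 * deriv ω z = (z / f z) ^ 2 * deriv f z - 1 := by
  have hquot : HasDerivAt (fun w => w / f w) ((1 * f z - z * deriv f z) / f z ^ 2) z :=
    (hasDerivAt_id z).div hf.hasDerivAt hfz
  have hrhs : HasDerivAt (fun w => 1 - a * w - c * w * ω w)
      (-(a * 1) - (c * 1 * ω z + c * z * deriv ω z)) z :=
    (((hasDerivAt_id z).const_mul a).const_sub 1).sub
      (((hasDerivAt_id z).const_mul c).mul hω.hasDerivAt)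
  have hderiv := hquot.unique (hrhs.congr_of_eventuallyEq heq)
  have hval := heq.self_of_nhds
  field_simp at hderiv hval ⊢
  linear_combination z * hderiv - f z * hval

theorem exists_differentiableOn_eq_self_div {s : Set ℂ} {f : ℂ → ℂ} (hs : s ∈ 𝓝 0)
    (hf : DifferentiableOn ℂ f s) (hf0 : f 0 = 0) (hf1 : deriv f 0 = 1)
    (hfz : ∀ z ∈ s, z ≠ 0 → f z ≠ 0) :
    ∃ g : ℂ → ℂ, DifferentiableOn ℂ g s ∧ g 0 = 1 ∧ deriv g 0 = -(iteratedDeriv 2 f 0 / 2) ∧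
      ∀ z ≠ 0, g z = z / f z := by
  set h := dslope f 0
  have hh : DifferentiableOn ℂ h s := (differentiableOn_dslope hs).2 hf
  have hh0 : h 0 = 1 := by simp [h, hf1]
  have hhz : ∀ z ≠ 0, h z = f z / z := fun z hz => by
    simp [h, dslope_of_ne _ hz, slope_def_field, hf0]
  have hne : ∀ z ∈ s, h z ≠ 0 := by
    intro z hz
    rcases eq_or_ne z 0 with rfl | hz0
    · simp [hh0]
    · rw [hhz z hz0]
      exact div_ne_zero (hfz z hz hz0) hz0
  refine ⟨h⁻¹, hh.inv hne, by simp [hh0], ?_, fun z hz => by simp [hhz z hz]⟩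
  rw [((hh.differentiableAt hs).hasDerivAt.inv (hne 0 (mem_of_mem_nhds hs))).deriv, hh0,
    (hf.analyticAt hs).deriv_dslope_self]
  simp

theorem exists_self_div_eq_one_sub_mul_sub_mul {s : Set ℂ} {f : ℂ → ℂ} {c : ℂ} (hs : s ∈ 𝓝 0)
    (hf : DifferentiableOn ℂ f s) (hf0 : f 0 = 0) (hf1 : deriv f 0 = 1)
    (hfz : ∀ z ∈ s, z ≠ 0 → f z ≠ 0) (hc : c ≠ 0) :
    ∃ ω : ℂ → ℂ, DifferentiableOn ℂ ω s ∧ ω 0 = 0 ∧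
      ∀ z ≠ 0, z / f z = 1 - iteratedDeriv 2 f 0 / 2 * z - c * z * ω z := by
  obtain ⟨g, hg, hg0, hg', hgz⟩ := exists_differentiableOn_eq_self_div hs hf hf0 hf1 hfz
  set k := dslope (dslope g 0) 0
  have hk : DifferentiableOn ℂ k s :=
    (differentiableOn_dslope hs).2 ((differentiableOn_dslope hs).2 hg)
  refine ⟨fun z => -(c⁻¹ * (z * k z)), ((differentiableOn_id.mul hk).const_mul _).neg, by simp,
    fun z hz => ?_⟩
  have htaylor := eq_add_sub_smul_deriv_add_sq_smul_dslope_dslope g 0 z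
  rw [hg0, hg', hgz z hz, sub_zero, smul_eq_mul, smul_eq_mul] at htaylor
  rw [htaylor]
  field_simp
  ring

theorem U_lambda_representation (f : ℂ → ℂ) (lam : ℝ) (hlam0 : 0 < lam) (hlam1 : lam ≤ 1)
    (hf : AnalyticOnNhd ℂ f (ball 0 1)) (hf0 : f 0 = 0) (hf1 : deriv f 0 = 1)
    (hU : ∀ z ∈ ball (0:ℂ) 1, z ≠ 0 → ‖(z / f z) ^ 2 * deriv f z - 1‖ < lam)
    (a : ℕ → ℂ) (ha : ∀ n, a n = iteratedDeriv n f 0 / n.factorial) :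
    ∃ ω : ℂ → ℂ, AnalyticOnNhd ℂ ω (ball 0 1) ∧
      (∀ z ∈ ball (0:ℂ) 1, ‖ω z‖ ≤ ‖z‖) ∧
      (∀ z ∈ ball (0:ℂ) 1, ‖deriv ω z‖ ≤ 1) ∧
      (∀ z ∈ ball (0:ℂ) 1, z ≠ 0 → z / f z = 1 - a 2 * z - (lam : ℂ) * z * ω z) := by
  -- at a zero of `f` the quantity in `hU` is `-1`, of norm `1 ≥ lam`
  have hfz : ∀ z ∈ ball (0:ℂ) 1, z ≠ 0 → f z ≠ 0 := fun z hz hz0 hfz => by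
    simpa [hfz] using (hU z hz hz0).trans_le hlam1
  have hlam : (lam : ℂ) ≠ 0 := ofReal_ne_zero.mpr hlam0.ne'
  obtain ⟨ω, hω, hω0, hrep⟩ := exists_self_div_eq_one_sub_mul_sub_mul (ball_mem_nhds 0 one_pos)
    hf.differentiableOn hf0 hf1 hfz hlam
  have hsq : ∀ z ∈ ball (0:ℂ) 1, ‖z ^ 2 • deriv ω z‖ ≤ 1 := by
    intro z hz
    rcases eq_or_ne z 0 with rfl | hz0
    · simp
    have hderiv := mul_sq_deriv_eq_of_div_eq (hf z hz).differentiableAt (hfz z hz hz0)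
      (hω.differentiableAt (isOpen_ball.mem_nhds hz)) ((eventually_ne_nhds hz0).mono hrep)
    have hnorm : lam * ‖z ^ 2 • deriv ω z‖ < lam := by
      simpa [← hderiv, mul_assoc, abs_of_pos hlam0] using hU z hz hz0
    exact (lt_of_mul_lt_mul_left (hnorm.trans_eq (mul_one lam).symm) hlam0.le).le
  have hω' : ∀ z ∈ ball (0:ℂ) 1, ‖deriv ω z‖ ≤ 1 := fun z hz => by
    simpa using norm_le_div_sq_of_norm_sq_smul_le (hω.deriv isOpen_ball) hsq hz
  refine ⟨ω, hω.analyticOnNhd isOpen_ball, fun z hz => ?_, hω', fun z _ hz0 => ?_⟩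
  · simpa [hω0] using (convex_ball (0:ℂ) 1).norm_image_sub_le_of_norm_deriv_le
      (fun w hw => hω.differentiableAt (isOpen_ball.mem_nhds hw)) hω' (mem_ball_self one_pos) hz
  · simpa [ha 2] using hrep z hz0
end

section
/- For 0 < λ ≤ 1, the function f_λ(z) = z/((1−z)(1−λz)) has Taylor expansion f_λ(z) = Σₙ≥₁ ((1 − λⁿ)/(1 − λ)) zⁿ for 0 < λ < 1 (and coefficients n when λ = 1), and f_λ belongs to 𝒰(λ). -/
/-!
Writing `z / ((1 - z)(1 - λz)) = (1/(1-λ)) (1/(1-z) - 1/(1-λz))` turns `f_λ` into a difference of two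
geometric series, whence the coefficients `(1 - λⁿ)/(1 - λ)`. For membership in `𝒰(λ)`, the derivative is
`f_λ'(z) = (1 - λz²) / ((1 - z)(1 - λz))²`, so `(z / f_λ(z))² f_λ'(z) - 1 = -λz²`, whose modulus is `λ|z|² < λ`.
-/

open Complex Metric

lemma one_sub_ne_zero_of_norm_lt_one {R : Type*} [NormedRing R] [NormOneClass R] {x : R}
    (hx : ‖x‖ < 1) : 1 - x ≠ 0 := by
  rw [sub_ne_zero]
  rintro rfl
  simp at hx

noncomputable def fLam (c z : ℂ) : ℂ := z / ((1 - z) * (1 - c * z))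

section

variable {c z : ℂ}

lemma norm_mul_lt_one_of_norm_le_one (hc : ‖c‖ ≤ 1) (hz : ‖z‖ < 1) : ‖c * z‖ < 1 := by
  rw [norm_mul]
  exact mul_lt_one_of_nonneg_of_lt_one_right hc (norm_nonneg z) hz

lemma fLam_denom_ne_zero (hc : ‖c‖ ≤ 1) (hz : ‖z‖ < 1) : (1 - z) * (1 - c * z) ≠ 0 :=
  mul_ne_zero (one_sub_ne_zero_of_norm_lt_one hz)
    (one_sub_ne_zero_of_norm_lt_one (norm_mul_lt_one_of_norm_le_one hc hz))

lemma hasSum_fLam (hc1 : c ≠ 1) (hc : ‖c‖ ≤ 1) (hz : ‖z‖ < 1) :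
    HasSum (fun n : ℕ => (1 - c ^ n) / (1 - c) * z ^ n) (fLam c z) := by
  have hcz := norm_mul_lt_one_of_norm_le_one hc hz
  have hsum := ((hasSum_geometric_of_norm_lt_one hz).sub
    (hasSum_geometric_of_norm_lt_one hcz)).mul_left (1 - c)⁻¹
  have h1c : 1 - c ≠ 0 := sub_ne_zero.mpr hc1.symm
  have h1z := one_sub_ne_zero_of_norm_lt_one hz
  have h1cz := one_sub_ne_zero_of_norm_lt_one hcz
  have hval : (1 - c)⁻¹ * ((1 - z)⁻¹ - (1 - c * z)⁻¹) = fLam c z := by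
    rw [fLam]
    field_simp
    ring
  refine hval ▸ hsum.congr_fun fun n => ?_
  rw [mul_pow]
  field_simp

lemma hasSum_fLam_one (hz : ‖z‖ < 1) : HasSum (fun n : ℕ => (n : ℂ) * z ^ n) (fLam 1 z) := by
  rw [fLam, one_mul, ← sq]
  exact hasSum_coe_mul_geometric_of_norm_lt_one hz

lemma hasDerivAt_fLam (hne : (1 - z) * (1 - c * z) ≠ 0) :
    HasDerivAt (fLam c) ((1 - c * z ^ 2) / ((1 - z) * (1 - c * z)) ^ 2) z := by
  have hden : HasDerivAt (fun w => (1 - w) * (1 - c * w)) (-(1 - c * z) - (1 - z) * c) z :=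
    (((hasDerivAt_id z).const_sub 1).mul (((hasDerivAt_id z).const_mul c).const_sub 1)).congr_deriv
      (by simp only [id]; ring)
  exact ((hasDerivAt_id z).div hden hne).congr_deriv (by simp only [id]; ring)

lemma deriv_fLam_zero : deriv (fLam c) 0 = 1 := by
  simpa using (hasDerivAt_fLam (c := c) (z := 0) (by simp)).deriv

lemma analyticOnNhd_fLam (hc : ‖c‖ ≤ 1) : AnalyticOnNhd ℂ (fLam c) (ball 0 1) :=
  DifferentiableOn.analyticOnNhd
    (fun _ hw => (hasDerivAt_fLam
      (fLam_denom_ne_zero hc (mem_ball_zero_iff.mp hw))).differentiableAt.differentiableWithinAt)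
    isOpen_ball

lemma div_fLam (hz0 : z ≠ 0) : z / fLam c z = (1 - z) * (1 - c * z) := by
  rw [fLam, div_div_cancel₀ hz0]

lemma sq_div_fLam_mul_deriv_sub_one (hc : ‖c‖ ≤ 1) (hz : ‖z‖ < 1) (hz0 : z ≠ 0) :
    (z / fLam c z) ^ 2 * deriv (fLam c) z - 1 = -c * z ^ 2 := by
  have hne := fLam_denom_ne_zero hc hz
  rw [(hasDerivAt_fLam hne).deriv, div_fLam hz0, mul_div_cancel₀ _ (pow_ne_zero 2 hne)]
  ring

lemma norm_sq_div_fLam_mul_deriv_sub_one_lt (hc : ‖c‖ ≤ 1) (hc0 : c ≠ 0) (hz : ‖z‖ < 1)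
    (hz0 : z ≠ 0) : ‖(z / fLam c z) ^ 2 * deriv (fLam c) z - 1‖ < ‖c‖ := by
  rw [sq_div_fLam_mul_deriv_sub_one hc hz hz0, norm_mul, norm_neg, norm_pow]
  have hz2 : ‖z‖ ^ 2 < 1 := pow_lt_one₀ (norm_nonneg z) hz two_ne_zero
  simpa using mul_lt_mul_of_pos_left hz2 (norm_pos_iff.mpr hc0)

end

theorem f_lambda_properties (fl : ℂ → ℂ) (lam : ℝ) (hlam0 : 0 < lam) (hlam1 : lam ≤ 1)
    (hfl : ∀ z, fl z = z / ((1 - z) * (1 - (lam:ℂ) * z))) :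
    (lam < 1 → ∀ z ∈ ball (0:ℂ) 1,
      fl z = ∑' n : ℕ, (((1 - lam ^ n) / (1 - lam) : ℝ) : ℂ) * z ^ n) ∧
    (lam = 1 → ∀ z ∈ ball (0:ℂ) 1, fl z = ∑' n : ℕ, (n : ℂ) * z ^ n) ∧
    (AnalyticOnNhd ℂ fl (ball 0 1) ∧ fl 0 = 0 ∧ deriv fl 0 = 1 ∧
      ∀ z ∈ ball (0:ℂ) 1, z ≠ 0 → ‖(z / fl z) ^ 2 * deriv fl z - 1‖ < lam) := by
  obtain rfl : fl = fLam lam := funext hfl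
  have hnorm : ‖(lam : ℂ)‖ = lam := by rw [norm_real, Real.norm_of_nonneg hlam0.le]
  have hc : ‖(lam : ℂ)‖ ≤ 1 := hnorm.trans_le hlam1
  refine ⟨fun hlt z hz => ?_, fun heq z hz => ?_, analyticOnNhd_fLam hc, by simp [fLam],
    deriv_fLam_zero, fun z hz hz0 => ?_⟩
  · have hc1 : (lam : ℂ) ≠ 1 := by exact_mod_cast hlt.ne
    push_cast
    exact (hasSum_fLam hc1 hc (mem_ball_zero_iff.mp hz)).tsum_eq.symm
  · subst heq
    simpa using (hasSum_fLam_one (mem_ball_zero_iff.mp hz)).tsum_eq.symm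
  · have hc0 : (lam : ℂ) ≠ 0 := by exact_mod_cast hlam0.ne'
    simpa only [hnorm] using
      norm_sq_div_fLam_mul_deriv_sub_one_lt hc hc0 (mem_ball_zero_iff.mp hz) hz0
end

section
/- Let f ∈ 𝒰(λ), 0 < λ ≤ 1, with f(z) = z + a₂z² + a₃z³ + ... . Then |a₂² − a₃| ≤ λ, and this bound is attained by f_λ(z) = z/((1−z)(1−λz)). -/
/-!
Put `h(z) = z / f(z) = 1 + c₁ z + c₂ z² + ⋯`, holomorphic on the disc since `f` vanishes only
at `0` (a zero `z ≠ 0` would give `‖0 - 1‖ < λ ≤ 1`). Then `(z / f)² f' = h - z h'`, so the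
hypothesis says `‖h - z h' - 1‖ < λ`; since `h - z h' - 1 = -c₂ z² - 2 c₃ z³ - ⋯`, Cauchy's
estimate gives `|c₂| ≤ λ`. Comparing coefficients in `f h = z` (Leibniz's rule) gives
`c₂ = a₂² - a₃`. For `f_λ` one has `z / f_λ = (1 - z)(1 - λ z)`, whose `c₂` is `λ`.
-/

open Complex Metric Filter Topology

theorem Complex.norm_iteratedDeriv_le_of_forall_mem_ball_norm_le {F : Type*}
    [NormedAddCommGroup F] [NormedSpace ℂ F] [CompleteSpace F] {c : ℂ} {R C : ℝ} {f : ℂ → F}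
    (n : ℕ) (hR : 0 < R) (hf : DifferentiableOn ℂ f (ball c R))
    (hC : ∀ z ∈ ball c R, ‖f z‖ ≤ C) :
    ‖iteratedDeriv n f c‖ ≤ n.factorial * C / R ^ n := by
  have hlim : Tendsto (fun r : ℝ => n.factorial * C / r ^ n) (𝓝[<] R)
      (𝓝 (n.factorial * C / R ^ n)) :=
    (continuousAt_const.div (continuous_pow n).continuousAt
      (pow_ne_zero n hR.ne')).tendsto.mono_left nhdsWithin_le_nhds
  refine ge_of_tendsto hlim ?_
  filter_upwards [Ioo_mem_nhdsLT hR] with r ⟨hr0, hrR⟩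
  exact norm_iteratedDeriv_le_of_forall_mem_sphere_norm_le n hr0
    (hf.diffContOnCl_ball (closedBall_subset_ball hrR))
    fun z hz => hC z (sphere_subset_closedBall.trans (closedBall_subset_ball hrR) hz)

section NontriviallyNormedField

variable {𝕜 : Type*} [NontriviallyNormedField 𝕜]

noncomputable def taylorCoeff (f : 𝕜 → 𝕜) (n : ℕ) : 𝕜 :=
  iteratedDeriv n f 0 / n.factorial

theorem sub_id_mul_deriv_eq_of_eventuallyEq_id_div {f h : 𝕜 → 𝕜} {z : 𝕜}
    (hf : DifferentiableAt 𝕜 f z) (hfz : f z ≠ 0) (hh : h =ᶠ[𝓝 z] fun w => w / f w) :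
    h z - z * deriv h z = (z / f z) ^ 2 * deriv f z := by
  rw [hh.eq_of_nhds, hh.deriv_eq, deriv_fun_div differentiableAt_fun_id hf hfz, deriv_id'']
  field_simp
  ring

variable [CharZero 𝕜]

theorem taylorCoeff_two_one_sub_mul_one_sub (c : 𝕜) :
    taylorCoeff (fun z => (1 - z) * (1 - c * z)) 2 = c := by
  rw [taylorCoeff, iteratedDeriv_fun_mul (by fun_prop) (by fun_prop)]
  simp [Finset.sum_range_succ, iteratedDeriv_succ]

theorem sq_taylorCoeff_two_sub_taylorCoeff_three_of_mul_eventuallyEq_id {f h : 𝕜 → 𝕜}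
    (hf : ContDiffAt 𝕜 3 f 0) (hh : ContDiffAt 𝕜 3 h 0) (hf0 : f 0 = 0) (hh0 : h 0 = 1)
    (hfh : f * h =ᶠ[𝓝 0] fun z => z) :
    taylorCoeff f 2 ^ 2 - taylorCoeff f 3 = taylorCoeff h 2 := by
  have leibniz : ∀ n ≤ 3, ∑ i ∈ Finset.range (n + 1),
      n.choose i * iteratedDeriv i f 0 * iteratedDeriv (n - i) h 0 = if n = 1 then 1 else 0 :=
    fun n hn => by
      rw [← iteratedDeriv_mul (hf.of_le (by exact_mod_cast hn)) (hh.of_le (by exact_mod_cast hn)),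
        hfh.iteratedDeriv_eq, iteratedDeriv_fun_id_zero]
  have e1 : deriv f 0 = 1 := by
    simpa [Finset.sum_range_succ, hf0, hh0] using leibniz 1 (by norm_num)
  have e2 : 2 * deriv h 0 + iteratedDeriv 2 f 0 = 0 := by
    simpa [Finset.sum_range_succ, hf0, hh0, e1] using leibniz 2 (by norm_num)
  have e3 : 3 * iteratedDeriv 2 h 0 + 3 * iteratedDeriv 2 f 0 * deriv h 0
      + iteratedDeriv 3 f 0 = 0 := by
    simpa [Finset.sum_range_succ, hf0, hh0, e1] using leibniz 3 (by norm_num)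
  simp only [taylorCoeff, Nat.factorial]
  push_cast
  linear_combination (iteratedDeriv 2 f 0 / 4) * e2 - e3 / 6

theorem sq_taylorCoeff_two_sub_taylorCoeff_three_id_div_one_sub_mul_one_sub (c : 𝕜) :
    taylorCoeff (fun z => z / ((1 - z) * (1 - c * z))) 2 ^ 2 -
      taylorCoeff (fun z => z / ((1 - z) * (1 - c * z))) 3 = c := by
  have hq : ContDiffAt 𝕜 3 (fun z : 𝕜 => (1 - z) * (1 - c * z)) 0 := by fun_prop
  have hq0 : (1 - 0) * (1 - c * 0) ≠ 0 := by simp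
  have hf : ContDiffAt 𝕜 3 (fun z => z / ((1 - z) * (1 - c * z))) 0 :=
    contDiffAt_fun_id.div hq hq0
  rw [sq_taylorCoeff_two_sub_taylorCoeff_three_of_mul_eventuallyEq_id hf hq (by simp) (by simp),
    taylorCoeff_two_one_sub_mul_one_sub]
  filter_upwards [hq.continuousAt.eventually_ne hq0] with z hz
  exact div_mul_cancel₀ z hz

variable [CompleteSpace 𝕜]

theorem iteratedDeriv_sub_id_mul_deriv_zero {h : 𝕜 → 𝕜} (hh : AnalyticAt 𝕜 h 0) (n : ℕ) :
    iteratedDeriv n (fun z => h z - z * deriv h z) 0 = (1 - n) * iteratedDeriv n h 0 := by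
  have hmul : iteratedDeriv n (fun z => z * deriv h z) 0 = n * iteratedDeriv n h 0 := by
    rw [iteratedDeriv_fun_mul contDiffAt_fun_id hh.deriv.contDiffAt]
    rcases n with _ | n
    · simp
    rw [Finset.sum_eq_single 1 (fun i _ hi => by simp [iteratedDeriv_fun_id_zero, hi])
      (by simp), iteratedDeriv_fun_id_zero]
    simp [iteratedDeriv_succ']
  rw [iteratedDeriv_fun_sub hh.contDiffAt (contDiffAt_fun_id.mul hh.deriv.contDiffAt), hmul]
  ring

end NontriviallyNormedField

theorem exists_differentiableOn_eq_id_div {f : ℂ → ℂ} {s : Set ℂ}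
    (hf : DifferentiableOn ℂ f s) (hs : s ∈ 𝓝 0) (hf0 : f 0 = 0) (hf1 : deriv f 0 = 1)
    (hne : ∀ z ∈ s, z ≠ 0 → f z ≠ 0) :
    ∃ h : ℂ → ℂ, DifferentiableOn ℂ h s ∧ h 0 = 1 ∧ (∀ z, z ≠ 0 → h z = z / f z) ∧
      f * h =ᶠ[𝓝 0] fun z => z := by
  have hslope : ∀ z, z ≠ 0 → dslope f 0 z = f z / z := fun z hz => by
    rw [dslope_of_ne f hz, slope_def_field, hf0, sub_zero, sub_zero]
  have hdslope_ne : ∀ z ∈ s, dslope f 0 z ≠ 0 := fun z hz => by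
    rcases eq_or_ne z 0 with rfl | hz0
    · simp [hf1]
    · rw [hslope z hz0]; exact div_ne_zero (hne z hz hz0) hz0
  refine ⟨fun z => (dslope f 0 z)⁻¹, ((differentiableOn_dslope hs).2 hf).inv hdslope_ne,
    by simp [hf1], fun z hz => by simp only [hslope z hz, inv_div], ?_⟩
  filter_upwards [hs] with z hz
  rcases eq_or_ne z 0 with rfl | hz0
  · simp [hf0]
  · simp only [Pi.mul_apply]
    rw [hslope z hz0, inv_div, mul_div_cancel₀ _ (hne z hz hz0)]

theorem norm_mul_taylorCoeff_le_of_forall_norm_one_sub_sub_id_mul_deriv_le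
    {h : ℂ → ℂ} {R C : ℝ} {n : ℕ} (hn : 0 < n) (hR : 0 < R) (hh : DifferentiableOn ℂ h (ball 0 R))
    (hC : ∀ z ∈ ball 0 R, ‖1 - (h z - z * deriv h z)‖ ≤ C) :
    ‖(n - 1 : ℂ) * taylorCoeff h n‖ ≤ C / R ^ n := by
  have hH : DifferentiableOn ℂ (fun z => 1 - (h z - z * deriv h z)) (ball 0 R) :=
    (differentiableOn_const 1).sub (hh.sub (differentiableOn_id.mul (hh.deriv isOpen_ball)))
  have := Complex.norm_iteratedDeriv_le_of_forall_mem_ball_norm_le n hR hH hC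
  rw [iteratedDeriv_const_sub hn, iteratedDeriv_neg, iteratedDeriv_sub_id_mul_deriv_zero
    (hh.analyticAt (ball_mem_nhds 0 hR)), ← neg_mul, neg_sub] at this
  rw [taylorCoeff, mul_div_assoc', norm_div, Complex.norm_natCast, div_le_iff₀ (by positivity)]
  exact this.trans_eq (by ring)

theorem zalcman_n2_U_lambda (f fl : ℂ → ℂ) (lam : ℝ) (hlam0 : 0 < lam) (hlam1 : lam ≤ 1)
    (hf : AnalyticOnNhd ℂ f (ball 0 1)) (hf0 : f 0 = 0) (hf1 : deriv f 0 = 1)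
    (hU : ∀ z ∈ ball (0:ℂ) 1, z ≠ 0 → ‖(z / f z) ^ 2 * deriv f z - 1‖ < lam)
    (a : ℕ → ℂ) (ha : ∀ n, a n = iteratedDeriv n f 0 / n.factorial)
    (hfl : ∀ z, fl z = z / ((1 - z) * (1 - (lam:ℂ) * z)))
    (b : ℕ → ℂ) (hb : ∀ n, b n = iteratedDeriv n fl 0 / n.factorial) :
    ‖(a 2) ^ 2 - a 3‖ ≤ lam ∧ ‖(b 2) ^ 2 - b 3‖ = lam := by
  obtain rfl : a = taylorCoeff f := funext ha
  obtain rfl : b = taylorCoeff fl := funext hb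
  obtain rfl : fl = fun z => z / ((1 - z) * (1 - (lam:ℂ) * z)) := funext hfl
  refine ⟨?_, by simp [sq_taylorCoeff_two_sub_taylorCoeff_three_id_div_one_sub_mul_one_sub,
    hlam0.le]⟩
  have hne : ∀ z ∈ ball (0:ℂ) 1, z ≠ 0 → f z ≠ 0 := fun z hz hz0 hfz => by
    simpa [hfz] using (hU z hz hz0).trans_le hlam1
  obtain ⟨h, hh, hh0, hh_eq, hfh⟩ := exists_differentiableOn_eq_id_div hf.differentiableOn
    (ball_mem_nhds 0 one_pos) hf0 hf1 hne
  have hbound : ∀ z ∈ ball (0:ℂ) 1, ‖1 - (h z - z * deriv h z)‖ ≤ lam := by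
    intro z hz
    rcases eq_or_ne z 0 with rfl | hz0
    · simp [hh0, hlam0.le]
    rw [norm_sub_rev, sub_id_mul_deriv_eq_of_eventuallyEq_id_div (hf z hz).differentiableAt
      (hne z hz hz0) ((eventually_ne_nhds hz0).mono hh_eq)]
    exact (hU z hz hz0).le
  rw [sq_taylorCoeff_two_sub_taylorCoeff_three_of_mul_eventuallyEq_id
    (hf 0 (mem_ball_self one_pos)).contDiffAt
    (hh.analyticAt (ball_mem_nhds 0 one_pos)).contDiffAt hf0 hh0 hfh]
  simpa [show (2 : ℂ) - 1 = 1 by norm_num] using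
    norm_mul_taylorCoeff_le_of_forall_norm_one_sub_sub_id_mul_deriv_le two_pos one_pos hh hbound
end
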